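/- arXiv:1101.4759 — 3 statements merged into one kernel-verified Lean document; each statement's English description precedes it below -/
import Mathlib

section
/- Let ρ be a unitary representation of a group G on H, K a subgroup, H^K the K-fixed subspace, and P the orthogonal projection onto H^K. If Θ_m ∈ K is a sequence such that ρ(Θ_m) converges weakly to P, then for all g, h ∈ G the operators P ρ(g Θ_m h) P converge weakly to (P ρ(g) P)(P ρ(h) P). -/
/- Since `P` is self-adjoint and `ρ(g)* = ρ(g⁻¹)`,
`⟪P ρ(g Θ_m h) P x, y⟫ = ⟪ρ(Θ_m) (ρ(h) P x), ρ(g⁻¹) P y⟫`, which by weak convergence tends to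
`⟪P ρ(h) P x, ρ(g⁻¹) P y⟫ = ⟪P ρ(g) P ρ(h) P x, y⟫`. -/

open scoped ComplexInnerProductSpace
open Filter

/-- The submodule of vectors fixed by the subgroup `K` under a unitary
representation `ρ`. -/
def fixedSubmodule {G H : Type*} [Group G] [NormedAddCommGroup H]
    [InnerProductSpace ℂ H] (ρ : G →* (H ≃ₗᵢ[ℂ] H)) (K : Subgroup G) :
    Submodule ℂ H where
  carrier := {v | ∀ k ∈ K, ρ k v = v}
  add_mem' := by
    intro a b ha hb k hk
    simp [map_add, ha k hk, hb k hk]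
  zero_mem' := by
    intro k hk
    simp
  smul_mem' := by
    intro c a ha k hk
    simp [map_smul, ha k hk]

section UnitaryRepresentation

variable {G 𝕜 H : Type*} [Group G] [RCLike 𝕜] [NormedAddCommGroup H] [InnerProductSpace 𝕜 H]
  (ρ : G →* (H ≃ₗᵢ[𝕜] H))

theorem MonoidHom.inner_map_left_eq_inner_map_inv (a : G) (u v : H) :
    inner 𝕜 (ρ a u) v = inner 𝕜 u (ρ a⁻¹ v) := by
  rw [map_inv, LinearIsometryEquiv.inv_def, LinearIsometryEquiv.inner_map_eq_flip]

theorem MonoidHom.inner_map_mul_mul_left (g t h : G) (u v : H) :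
    inner 𝕜 (ρ (g * t * h) u) v = inner 𝕜 (ρ t (ρ h u)) (ρ g⁻¹ v) := by
  rw [map_mul, map_mul]
  exact ρ.inner_map_left_eq_inner_map_inv g _ v

end UnitaryRepresentation

theorem stmt_3_general {G H : Type*} [Group G] [NormedAddCommGroup H]
    [InnerProductSpace ℂ H] [CompleteSpace H]
    (ρ : G →* (H ≃ₗᵢ[ℂ] H)) (P : H →L[ℂ] H)
    (hPsa : ContinuousLinearMap.adjoint P = P)
    (Θ : ℕ → G)
    (hweak : ∀ x y : H,
      Tendsto (fun m => ⟪ρ (Θ m) x, y⟫) atTop (nhds ⟪P x, y⟫)) :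
    ∀ g h : G, ∀ x y : H,
      Tendsto (fun m => ⟪P (ρ (g * Θ m * h) (P x)), y⟫) atTop
        (nhds ⟪P (ρ g (P (ρ h (P x)))), y⟫) := by
  intro g h x y
  have hP : ∀ u v : H, ⟪P u, v⟫ = ⟪u, P v⟫ :=
    (ContinuousLinearMap.isSelfAdjoint_iff'.2 hPsa).isSymmetric
  have hlim : ⟪P (ρ g (P (ρ h (P x)))), y⟫ = ⟪P (ρ h (P x)), ρ g⁻¹ (P y)⟫ := by
    rw [hP, ρ.inner_map_left_eq_inner_map_inv, hP]
  rw [hlim]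
  simp only [hP _ y, ρ.inner_map_mul_mul_left]
  exact hweak _ _

/-- Let `ρ` be a unitary representation of `G` on a complex Hilbert space `H`,
`K ≤ G`, `P` the orthogonal projection onto the `K`-fixed subspace, and
`Θ : ℕ → K` a sequence with `ρ(Θ_m) → P` in the weak operator topology. Then
for all `g, h ∈ G`, the operators `P ρ(g Θ_m h) P` converge weakly to
`(P ρ(g) P) (P ρ(h) P)`. -/
theorem stmt_3 {G H : Type*} [Group G] [NormedAddCommGroup H]
    [InnerProductSpace ℂ H] [CompleteSpace H]
    (ρ : G →* (H ≃ₗᵢ[ℂ] H)) (K : Subgroup G) (P : H →L[ℂ] H)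
    (hPmem : ∀ v : H, P v ∈ fixedSubmodule ρ K)
    (hPfix : ∀ v ∈ fixedSubmodule ρ K, P v = v)
    (hPsa : ContinuousLinearMap.adjoint P = P)
    (Θ : ℕ → G) (hΘK : ∀ m, Θ m ∈ K)
    (hweak : ∀ x y : H,
      Tendsto (fun m => ⟪ρ (Θ m) x, y⟫) atTop (nhds ⟪P x, y⟫)) :
    ∀ g h : G, ∀ x y : H,
      Tendsto (fun m => ⟪P (ρ (g * Θ m * h) (P x)), y⟫) atTop
        (nhds ⟪P (ρ g (P (ρ h (P x)))), y⟫) :=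
  stmt_3_general ρ P hPsa Θ hweak
end

section
/- Let g = [[A,B],[C,D]] and g' = [[P,Q],[R,T]] be block matrices over a field with blocks of compatible sizes, and let U, V, U', V' be invertible matrices of appropriate sizes. Then ([[1,0],[0,U]] g [[1,0],[0,V]]) ∘ ([[1,0],[0,U']] g' [[1,0],[0,V']]) equals [[1,0],[0,W]] (g ∘ g') [[1,0],[0,W']] for suitable block-diagonal invertible matrices W = diag(U, 1) (up to permutation of blocks) and W' = diag(V', 1); in particular the ∘-product [[AP,B,AQ],[CP,D,CQ],[R,0,T]] descends to a well-defined operation on equivalence classes of matrices modulo left/right multiplication by matrices of the form [[1,0],[0,orthogonal]]. -/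
/-
The ∘-product is linear in the block rows `[C D]`, `[R T]` and in the block columns
`[B; D]`, `[Q; T]`, and it places each of these blocks in its own block row or column of `g ∘ g'`.
Hence left multiplication of `C, D` by `U` and of `R, T` by `U'` amounts to left multiplication of
`g ∘ g'` by `diag(1, U, U')`, and similarly on the right.
-/

open Matrix

/-- The `∘`-product of formula (1.2):
`[[A,B],[C,D]] ∘ [[P,Q],[R,T]] = [[AP,B,AQ],[CP,D,CQ],[R,0,T]]`. -/
noncomputable def circ {β α γ n m : Type*} [Fintype α]
    (A : Matrix β α ℝ) (B : Matrix β n ℝ) (C : Matrix n α ℝ) (D : Matrix n n ℝ)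
    (P : Matrix α γ ℝ) (Q : Matrix α m ℝ) (R : Matrix m γ ℝ) (T : Matrix m m ℝ) :
    Matrix (β ⊕ (n ⊕ m)) (γ ⊕ (n ⊕ m)) ℝ :=
  Matrix.fromBlocks (A * P) (Matrix.fromCols B (A * Q))
    (Matrix.fromRows (C * P) R)
    (Matrix.fromBlocks D (C * Q) 0 T)

section

variable {β α γ n m : Type*} [Fintype α]
  (A : Matrix β α ℝ) (B : Matrix β n ℝ) (C : Matrix n α ℝ) (D : Matrix n n ℝ)
  (P : Matrix α γ ℝ) (Q : Matrix α m ℝ) (R : Matrix m γ ℝ) (T : Matrix m m ℝ)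

theorem circ_mul_left [Fintype β] [Fintype n] [Fintype m] [DecidableEq β]
    (U : Matrix n n ℝ) (U' : Matrix m m ℝ) :
    circ A B (U * C) (U * D) P Q (U' * R) (U' * T) =
      fromBlocks (1 : Matrix β β ℝ) 0 0 (fromBlocks U 0 0 U') * circ A B C D P Q R T := by
  simp [circ, fromBlocks_multiply, fromBlocks_mul_fromRows, Matrix.mul_assoc]

theorem circ_mul_right [Fintype γ] [Fintype n] [Fintype m] [DecidableEq γ]
    (V : Matrix n n ℝ) (V' : Matrix m m ℝ) :
    circ A (B * V) C (D * V) P (Q * V') R (T * V') =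
      circ A B C D P Q R T * fromBlocks (1 : Matrix γ γ ℝ) 0 0 (fromBlocks V 0 0 V') := by
  simp [circ, fromBlocks_multiply, fromCols_mul_fromBlocks, Matrix.mul_assoc]

end

theorem stmt_6_general {β α γ n m : Type*}
    [Fintype β] [Fintype α] [Fintype γ] [Fintype n] [Fintype m]
    [DecidableEq β] [DecidableEq γ]
    (A : Matrix β α ℝ) (B : Matrix β n ℝ) (C : Matrix n α ℝ) (D : Matrix n n ℝ)
    (P : Matrix α γ ℝ) (Q : Matrix α m ℝ) (R : Matrix m γ ℝ) (T : Matrix m m ℝ)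
    (U V : Matrix n n ℝ) (U' V' : Matrix m m ℝ) :
    circ A (B * V) (U * C) (U * D * V) P (Q * V') (U' * R) (U' * T * V')
      =
    Matrix.fromBlocks (1 : Matrix β β ℝ) 0 0 (Matrix.fromBlocks U 0 0 U') *
      circ A B C D P Q R T *
      Matrix.fromBlocks (1 : Matrix γ γ ℝ) 0 0 (Matrix.fromBlocks V 0 0 V') := by
  rw [Matrix.mul_assoc U D V, Matrix.mul_assoc U' T V', circ_mul_left, circ_mul_right,
    Matrix.mul_assoc]

/-- Replacing `g = [[A,B],[C,D]]` by `[[1,0],[0,U]] g [[1,0],[0,V]]` and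
`g' = [[P,Q],[R,T]]` by `[[1,0],[0,U']] g' [[1,0],[0,V']]` with `U, V, U', V'`
orthogonal changes the product `g ∘ g'` only by left multiplication by
`[[1,0],[0,diag(U,U')]]` and right multiplication by `[[1,0],[0,diag(V,V')]]`;
hence the `∘`-product descends to equivalence classes of matrices modulo
left/right multiplication by matrices `[[1,0],[0,orthogonal]]`. -/
theorem stmt_6 {β α γ n m : Type*}
    [Fintype β] [Fintype α] [Fintype γ] [Fintype n] [Fintype m]
    [DecidableEq β] [DecidableEq α] [DecidableEq γ] [DecidableEq n] [DecidableEq m]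
    (A : Matrix β α ℝ) (B : Matrix β n ℝ) (C : Matrix n α ℝ) (D : Matrix n n ℝ)
    (P : Matrix α γ ℝ) (Q : Matrix α m ℝ) (R : Matrix m γ ℝ) (T : Matrix m m ℝ)
    (U V : Matrix n n ℝ) (U' V' : Matrix m m ℝ)
    (hU : U ∈ Matrix.orthogonalGroup n ℝ) (hV : V ∈ Matrix.orthogonalGroup n ℝ)
    (hU' : U' ∈ Matrix.orthogonalGroup m ℝ)
    (hV' : V' ∈ Matrix.orthogonalGroup m ℝ) :
    circ A (B * V) (U * C) (U * D * V) P (Q * V') (U' * R) (U' * T * V')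
      =
    Matrix.fromBlocks (1 : Matrix β β ℝ) 0 0 (Matrix.fromBlocks U 0 0 U') *
      circ A B C D P Q R T *
      Matrix.fromBlocks (1 : Matrix γ γ ℝ) 0 0 (Matrix.fromBlocks V 0 0 V') :=
  stmt_6_general A B C D P Q R T U V U' V'
end

section
/- Let g, h be elements of the group GL_fin of infinite matrices over ℝ differing from the identity in finitely many entries, both of the block form [[a,b,0],[c,d,0],[0,0,1_∞]] with respect to a decomposition of sizes α + N + ∞ (i.e., supported in the top-left (α+N) block). Let Θ denote the permutation matrix of block form that swaps the second block (size N+k) with a further disjoint block of size N+k beyond the support. Then the product g Θ h, after conjugation by a permutation fixing the first α coordinates, equals the block matrix [[ap, aq, b, 0],[cp, cq, d, 0],[r, t, 0, 0],[0,0,0,1]] where g = [[a,b],[c,d]], h = [[p,q],[r,t]] in (α+N)-block form — in particular, the double coset of g Θ_m h with respect to the subgroup of permutations fixing the first α coordinates is eventually independent of m. -/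
open Matrix

section

variable (a n k w : Type*) [Fintype a] [Fintype n] [Fintype k] [Fintype w]
  [DecidableEq a] [DecidableEq n] [DecidableEq k] [DecidableEq w]

/-- An element of `GL_fin` of block form `[[A,B,0],[C,D,0],[0,0,1]]` with respect
to the decomposition `a ⊕ ((n ⊕ k) ⊕ ((n ⊕ k) ⊕ w))` (supported in the
top-left `(a + n)`-block, identity elsewhere). -/
noncomputable def suppMat {a n k w : Type*} [Fintype k] [Fintype n] [Fintype w]
    [DecidableEq n] [DecidableEq k] [DecidableEq w]
    (A : Matrix a a ℝ) (B : Matrix a n ℝ) (C : Matrix n a ℝ) (D : Matrix n n ℝ) :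
    Matrix (a ⊕ ((n ⊕ k) ⊕ ((n ⊕ k) ⊕ w))) (a ⊕ ((n ⊕ k) ⊕ ((n ⊕ k) ⊕ w))) ℝ :=
  Matrix.fromBlocks A
    (Matrix.fromCols (Matrix.fromCols B 0) 0)
    (Matrix.fromRows (Matrix.fromRows C 0) 0)
    (Matrix.fromBlocks (Matrix.fromBlocks D 0 0 1) 0 0 1)

/-- The permutation matrix `Θ` swapping the two `(n ⊕ k)`-blocks and fixing the
`a`-block and the tail `w`. -/
noncomputable def thetaMat {a n k w : Type*} [Fintype n] [Fintype k] [Fintype w]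
    [DecidableEq a] [DecidableEq n] [DecidableEq k] [DecidableEq w] :
    Matrix (a ⊕ ((n ⊕ k) ⊕ ((n ⊕ k) ⊕ w))) (a ⊕ ((n ⊕ k) ⊕ ((n ⊕ k) ⊕ w))) ℝ :=
  Matrix.fromBlocks 1 0 0
    (Matrix.fromBlocks 0 (Matrix.fromCols 1 0)
      (Matrix.fromRows 1 0) (Matrix.fromBlocks 0 0 0 1))

/-- The target block matrix `S = [[ap,aq,b,0],[cp,cq,d,0],[r,t,0,0],[0,0,0,1]]`
with respect to the decomposition `a ⊕ (n ⊕ (n ⊕ (k ⊕ (k ⊕ w))))`. -/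
noncomputable def targetMat {a n k w : Type*} [Fintype a] [Fintype n]
    [DecidableEq n] [DecidableEq k] [DecidableEq w]
    (A : Matrix a a ℝ) (B : Matrix a n ℝ) (C : Matrix n a ℝ) (D : Matrix n n ℝ)
    (P : Matrix a a ℝ) (Q : Matrix a n ℝ) (R : Matrix n a ℝ) (T : Matrix n n ℝ) :
    Matrix (a ⊕ (n ⊕ (n ⊕ (k ⊕ (k ⊕ w))))) (a ⊕ (n ⊕ (n ⊕ (k ⊕ (k ⊕ w))))) ℝ :=
  Matrix.fromBlocks (A * P)
    (Matrix.fromCols (A * Q) (Matrix.fromCols B 0))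
    (Matrix.fromRows (C * P) (Matrix.fromRows R 0))
    (Matrix.fromBlocks (C * Q) (Matrix.fromCols D 0)
      (Matrix.fromRows T 0) (Matrix.fromBlocks 0 0 0 1))

/-!
`Θ` moves the rows of `h` indexed by the first `(n ⊕ k)`-block out of the support of `g`, where
`g` acts as the identity. So in `g Θ h` the blocks `p, q` of `h` meet `a, c`, while `b, d` and
`r, t` land in the second `n`-block of columns and of rows respectively; sorting the blocks
`n, k, n, k` into `n, n, k, k` (with the two `k`-blocks exchanged on the column side) gives the
target matrix.
-/

theorem suppMat_mul_thetaMat_mul_suppMat {a n k w : Type*} [Fintype a] [Fintype n] [Fintype k]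
    [Fintype w] [DecidableEq a] [DecidableEq n] [DecidableEq k] [DecidableEq w]
    (A : Matrix a a ℝ) (B : Matrix a n ℝ) (C : Matrix n a ℝ) (D : Matrix n n ℝ)
    (P : Matrix a a ℝ) (Q : Matrix a n ℝ) (R : Matrix n a ℝ) (T : Matrix n n ℝ) :
    suppMat (k := k) (w := w) A B C D * thetaMat * suppMat P Q R T =
      fromBlocks (A * P) (fromCols (fromCols (A * Q) 0) (fromCols (fromCols B 0) 0))
        (fromRows (fromRows (C * P) 0) (fromRows (fromRows R 0) 0))
        (fromBlocks (fromBlocks (C * Q) 0 0 0) (fromCols (fromBlocks D 0 0 1) 0)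
          (fromRows (fromBlocks T 0 0 1) 0) (fromBlocks 0 0 0 1)) := by
  simp only [suppMat, thetaMat, fromBlocks_multiply, fromCols_mul_fromBlocks,
    fromBlocks_mul_fromRows, fromRows_mul, mul_fromCols, fromCols_mul_fromRows,
    Matrix.mul_one, Matrix.one_mul, Matrix.mul_zero, Matrix.zero_mul, add_zero, zero_add]
  ext (i | (i | i) | (i | i) | i) (j | (j | j) | (j | j) | j) <;> simp

def sortBlocks (n k w : Type*) : (n ⊕ k) ⊕ ((n ⊕ k) ⊕ w) ≃ n ⊕ (n ⊕ (k ⊕ (k ⊕ w))) where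
  toFun
    | .inl (.inl x) => .inl x
    | .inl (.inr y) => .inr (.inr (.inl y))
    | .inr (.inl (.inl x)) => .inr (.inl x)
    | .inr (.inl (.inr y)) => .inr (.inr (.inr (.inl y)))
    | .inr (.inr z) => .inr (.inr (.inr (.inr z)))
  invFun
    | .inl x => .inl (.inl x)
    | .inr (.inl x) => .inr (.inl (.inl x))
    | .inr (.inr (.inl y)) => .inl (.inr y)
    | .inr (.inr (.inr (.inl y))) => .inr (.inl (.inr y))
    | .inr (.inr (.inr (.inr z))) => .inr (.inr z)
  left_inv := by rintro ((x | x) | (x | x) | x) <;> rfl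
  right_inv := by rintro (x | x | x | x | x) <;> rfl

def sortBlocksSwap (n k w : Type*) : (n ⊕ k) ⊕ ((n ⊕ k) ⊕ w) ≃ n ⊕ (n ⊕ (k ⊕ (k ⊕ w))) where
  toFun
    | .inl (.inl x) => .inl x
    | .inl (.inr y) => .inr (.inr (.inr (.inl y)))
    | .inr (.inl (.inl x)) => .inr (.inl x)
    | .inr (.inl (.inr y)) => .inr (.inr (.inl y))
    | .inr (.inr z) => .inr (.inr (.inr (.inr z)))
  invFun
    | .inl x => .inl (.inl x)
    | .inr (.inl x) => .inr (.inl (.inl x))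
    | .inr (.inr (.inl y)) => .inr (.inl (.inr y))
    | .inr (.inr (.inr (.inl y))) => .inl (.inr y)
    | .inr (.inr (.inr (.inr z))) => .inr (.inr z)
  left_inv := by rintro ((x | x) | (x | x) | x) <;> rfl
  right_inv := by rintro (x | x | x | x | x) <;> rfl

theorem suppMat_mul_thetaMat_mul_suppMat_eq_submatrix {a n k w : Type*} [Fintype a]
    [Fintype n] [Fintype k] [Fintype w] [DecidableEq a] [DecidableEq n] [DecidableEq k]
    [DecidableEq w]
    (A : Matrix a a ℝ) (B : Matrix a n ℝ) (C : Matrix n a ℝ) (D : Matrix n n ℝ)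
    (P : Matrix a a ℝ) (Q : Matrix a n ℝ) (R : Matrix n a ℝ) (T : Matrix n n ℝ) :
    suppMat (k := k) (w := w) A B C D * thetaMat * suppMat P Q R T =
      (targetMat (k := k) (w := w) A B C D P Q R T).submatrix
        ((Equiv.refl a).sumCongr (sortBlocks n k w))
        ((Equiv.refl a).sumCongr (sortBlocksSwap n k w)) := by
  rw [suppMat_mul_thetaMat_mul_suppMat]
  ext (i | (i | i) | (i | i) | i) (j | (j | j) | (j | j) | j) <;>
    simp [targetMat, sortBlocks, sortBlocksSwap, one_apply]

/-- For `g = [[a,b,0],[c,d,0],[0,0,1]]`, `h = [[p,q,0],[r,t,0],[0,0,1]]` of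
block size `α + N + ∞` and `Θ` the permutation matrix swapping the block of
size `N + k` following the first `α` coordinates with the next disjoint block
of size `N + k`, the product `g Θ h` equals, after permutations of rows and
columns fixing the first `α` coordinates, the block matrix
`[[ap,aq,b,0],[cp,cq,d,0],[r,t,0,0],[0,0,0,1]]`; in particular the double
coset of `g Θ_m h` is eventually independent of `m`. -/
theorem stmt_19
    (ga : Matrix a a ℝ) (gb : Matrix a n ℝ) (gc : Matrix n a ℝ)
    (gd : Matrix n n ℝ)
    (hp : Matrix a a ℝ) (hq : Matrix a n ℝ) (hr : Matrix n a ℝ)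
    (ht : Matrix n n ℝ) :
    ∃ eR eC : (a ⊕ ((n ⊕ k) ⊕ ((n ⊕ k) ⊕ w))) ≃
        (a ⊕ (n ⊕ (n ⊕ (k ⊕ (k ⊕ w))))),
      (∀ i : a, eR (Sum.inl i) = Sum.inl i) ∧
      (∀ i : a, eC (Sum.inl i) = Sum.inl i) ∧
      suppMat (k := k) (w := w) ga gb gc gd * thetaMat *
          suppMat (k := k) (w := w) hp hq hr ht =
        (targetMat (k := k) (w := w) ga gb gc gd hp hq hr ht).submatrix eR eC := by
  exact ⟨_, _, fun _ => rfl, fun _ => rfl, suppMat_mul_thetaMat_mul_suppMat_eq_submatrix ..⟩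

end
end
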